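/- arXiv:1401.1966 — 2 statements merged into one kernel-verified Lean document; each statement's English description precedes it below -/
import Mathlib

section
/- Let ρ ∈ (1/2, 1), k ≥ 1 a natural number, and M = ℓ₁k + s₁ with ℓ₁ ≥ 1, 0 ≤ s₁ < k. Among all k-tuples (m₁,...,m_k) of positive natural numbers with m₁ + ... + m_k = M, the sum Σᵢ ℓ_ρ(mᵢ) is minimized precisely by tuples having k - s₁ entries equal to ℓ₁ and s₁ entries equal to ℓ₁ + 1 (i.e., any tuple not of this form up to permutation gives a strictly larger sum). -/
noncomputable def ell (ρ x : ℝ) : ℝ := Real.sqrt ((1 - ρ)^2 + (x - (1 - ρ))^2)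

/-!
With `c = 1 - ρ ≠ 0` we have `ell ρ x = ‖c + (x - c) i‖` in `ℂ`; the norm of the strictly convex
space `ℂ` is strictly convex along any line missing the origin, so `ell ρ` is strictly convex.
A strictly convex `f` lies strictly above the chord through `(ℓ, f ℓ)` and `(ℓ + 1, f (ℓ + 1))` at
every integer other than `ℓ, ℓ + 1`. Summing this affine minorant over the `mᵢ` only sees
`∑ mᵢ = M`, and it evaluates to the cost of the equidistributed tuple.
-/

open Set Finset

open Complex in
theorem strictConvexOn_sqrt_sq_add_sq {c : ℝ} (hc : c ≠ 0) :
    StrictConvexOn ℝ univ (fun x : ℝ => √(c ^ 2 + x ^ 2)) := by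
  refine ⟨convex_univ, fun x _ y _ hxy a b ha hb hab => ?_⟩
  let z : ℝ → ℂ := fun t => c + t * I
  have hz (t : ℝ) : ‖z t‖ = √(c ^ 2 + t ^ 2) := norm_add_mul_I c t
  have hcomb : z (a • x + b • y) = a • z x + b • z y := by
    apply Complex.ext <;> simp [z]
    linear_combination (-c) * hab
  have hray : ¬SameRay ℝ (a • z x) (b • z y) := by
    intro h
    obtain ⟨r₁, r₂, hr₁, hr₂, hr⟩ := h.exists_pos
      (fun h0 => by simpa [z, ha.ne', hc] using congrArg re h0)
      (fun h0 => by simpa [z, hb.ne', hc] using congrArg re h0)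
    -- equal real parts force `r₁ a = r₂ b`, and then the imaginary parts force `x = y`
    have hre := congrArg re hr
    have him := congrArg im hr
    simp [z] at hre him
    have hw : r₁ * a = r₂ * b := mul_right_cancel₀ hc (by linear_combination hre)
    exact hxy (mul_left_cancel₀ (mul_pos hr₁ ha).ne' (by linear_combination him - y * hw))
  show √(c ^ 2 + (a • x + b • y) ^ 2) < a • √(c ^ 2 + x ^ 2) + b • √(c ^ 2 + y ^ 2)
  rw [← hz, ← hz, ← hz, hcomb, smul_eq_mul, smul_eq_mul]
  calc ‖a • z x + b • z y‖ < ‖a • z x‖ + ‖b • z y‖ := norm_add_lt_of_not_sameRay hray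
    _ = a * ‖z x‖ + b * ‖z y‖ := by
      rw [norm_smul, norm_smul, Real.norm_of_nonneg ha.le, Real.norm_of_nonneg hb.le]

theorem strictConvexOn_ell {ρ : ℝ} (hρ : ρ ≠ 1) : StrictConvexOn ℝ univ (ell ρ) := by
  have h := (strictConvexOn_sqrt_sq_add_sq (sub_ne_zero.2 hρ.symm)).translate_left (-(1 - ρ))
  have e : ell ρ = (fun x : ℝ => √((1 - ρ) ^ 2 + x ^ 2)) ∘ fun z => z + -(1 - ρ) := by
    funext x
    simp [ell, sub_eq_add_neg]
  rwa [e, ← preimage_univ (f := fun z => -(1 - ρ) + z)]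

section Secant

variable {f : ℝ → ℝ}

theorem StrictConvexOn.secant_lt_of_notMem_Icc {s : Set ℝ} (hf : StrictConvexOn ℝ s f)
    {a b x : ℝ} (ha : a ∈ s) (hb : b ∈ s) (hx : x ∈ s) (hab : a < b) (hxab : x ∉ Icc a b) :
    f a + (f b - f a) / (b - a) * (x - a) < f x := by
  have hslope : (f b - f a) / (b - a) * (b - a) = f b - f a := div_mul_cancel₀ _ (sub_pos.2 hab).ne'
  rcases not_and_or.1 hxab with hxa | hbx
  · have h := hf.slope_strict_mono_adjacent hx hb (not_le.1 hxa) hab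
    rw [div_lt_iff₀ (sub_pos.2 (not_le.1 hxa))] at h
    linarith
  · have h := hf.slope_strict_mono_adjacent ha hx hab (not_le.1 hbx)
    rw [lt_div_iff₀ (sub_pos.2 (not_le.1 hbx))] at h
    linarith

variable (hf : StrictConvexOn ℝ univ f) (L n : ℕ)
include hf

theorem StrictConvexOn.secant_nat_lt (hL : n ≠ L) (hL' : n ≠ L + 1) :
    f L + (f (L + 1) - f L) * (n - L) < f n := by
  have hn : (n : ℝ) ∉ Icc (L : ℝ) (L + 1) := by
    rintro ⟨h, h'⟩
    have : L ≤ n ∧ n ≤ L + 1 := ⟨by exact_mod_cast h, by exact_mod_cast h'⟩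
    omega
  simpa using hf.secant_lt_of_notMem_Icc (mem_univ _) (mem_univ _) (mem_univ _)
    (lt_add_one (L : ℝ)) hn

theorem StrictConvexOn.secant_nat_eq_iff :
    f L + (f (L + 1) - f L) * (n - L) = f n ↔ n = L ∨ n = L + 1 := by
  refine ⟨fun h => ?_, ?_⟩
  · by_contra! hn
    exact (hf.secant_nat_lt L n hn.1 hn.2).ne h
  · rintro (rfl | rfl)
    · simp
    · push_cast; ring

theorem StrictConvexOn.secant_nat_le : f L + (f (L + 1) - f L) * (n - L) ≤ f n := by
  by_cases hn : n = L ∨ n = L + 1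
  · exact ((hf.secant_nat_eq_iff L n).2 hn).le
  · rw [not_or] at hn
    exact (hf.secant_nat_lt L n hn.1 hn.2).le

end Secant

section Sum

variable {ι : Type*} (s : Finset ι) {m : ι → ℕ} {L r : ℕ}

theorem sum_eq_mul_card_add_card_filter (h : ∀ i ∈ s, m i = L ∨ m i = L + 1) :
    ∑ i ∈ s, m i = L * #s + #{i ∈ s | m i = L + 1} := by
  rw [card_filter, mul_comm, ← smul_eq_mul, ← sum_const, ← sum_add_distrib]
  exact sum_congr rfl fun i hi => by rcases h i hi with h | h <;> simp [h]

variable {f : ℝ → ℝ} (hr : r ≤ #s) (hsum : ∑ i ∈ s, m i = L * #s + r)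
include hr hsum

theorem sum_secant_nat :
    ∑ i ∈ s, (f L + (f (L + 1) - f L) * (m i - L)) = (#s - r : ℕ) * f L + r * f (L + 1) := by
  have hsumR : ∑ i ∈ s, (m i : ℝ) = L * #s + r := by exact_mod_cast hsum
  rw [sum_add_distrib, ← mul_sum, sum_sub_distrib, hsumR, sum_const, sum_const, Nat.cast_sub hr]
  simp only [nsmul_eq_mul]
  ring

theorem StrictConvexOn.le_sum_nat (hf : StrictConvexOn ℝ univ f) :
    (#s - r : ℕ) * f L + r * f (L + 1) ≤ ∑ i ∈ s, f (m i) :=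
  sum_secant_nat s hr hsum ▸ sum_le_sum fun i _ => hf.secant_nat_le L (m i)

theorem StrictConvexOn.sum_nat_eq_iff (hf : StrictConvexOn ℝ univ f) :
    ∑ i ∈ s, f (m i) = (#s - r : ℕ) * f L + r * f (L + 1) ↔
      ∀ i ∈ s, m i = L ∨ m i = L + 1 := by
  rw [← sum_secant_nat s hr hsum, eq_comm,
    sum_eq_sum_iff_of_le fun i _ => hf.secant_nat_le L (m i)]
  exact forall₂_congr fun i _ => hf.secant_nat_eq_iff L (m i)

end Sum

theorem equidistribution_minimizes_general (ρ : ℝ) (hρ : ρ ∈ Set.Ioo (1/2 : ℝ) 1)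
    (k ℓ₁ s₁ M : ℕ) (hs₁ : s₁ < k)
    (hM : M = ℓ₁ * k + s₁) :
    ∀ m : Fin k → ℕ, (∀ i, 1 ≤ m i) → (∑ i, m i) = M →
      ((k - s₁ : ℕ) : ℝ) * ell ρ ℓ₁ + (s₁ : ℝ) * ell ρ ((ℓ₁ : ℝ) + 1)
          ≤ ∑ i, ell ρ (m i) ∧
      ((∑ i, ell ρ (m i)
          = ((k - s₁ : ℕ) : ℝ) * ell ρ ℓ₁ + (s₁ : ℝ) * ell ρ ((ℓ₁ : ℝ) + 1)) ↔
        (∀ i, m i = ℓ₁ ∨ m i = ℓ₁ + 1) ∧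
          (Finset.univ.filter (fun i => m i = ℓ₁ + 1)).card = s₁) := by
  intro m _ hsum
  have hf := strictConvexOn_ell hρ.2.ne
  have hcard : #(univ : Finset (Fin k)) = k := card_fin k
  have hs : s₁ ≤ #(univ : Finset (Fin k)) := by rw [hcard]; exact hs₁.le
  have hsum' : ∑ i, m i = ℓ₁ * #(univ : Finset (Fin k)) + s₁ := by rw [hsum, hM, hcard]
  have hle := hf.le_sum_nat univ hs hsum'
  have heq := hf.sum_nat_eq_iff univ hs hsum'
  rw [hcard] at hle heq
  rw [heq]
  refine ⟨hle, fun hmem => ⟨fun i => hmem i (mem_univ i), ?_⟩, fun h i _ => h.1 i⟩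
  have := sum_eq_mul_card_add_card_filter univ hmem
  omega

theorem equidistribution_minimizes (ρ : ℝ) (hρ : ρ ∈ Set.Ioo (1/2 : ℝ) 1)
    (k ℓ₁ s₁ M : ℕ) (hk : 1 ≤ k) (hℓ₁ : 1 ≤ ℓ₁) (hs₁ : s₁ < k)
    (hM : M = ℓ₁ * k + s₁) :
    ∀ m : Fin k → ℕ, (∀ i, 1 ≤ m i) → (∑ i, m i) = M →
      ((k - s₁ : ℕ) : ℝ) * ell ρ ℓ₁ + (s₁ : ℝ) * ell ρ ((ℓ₁ : ℝ) + 1)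
          ≤ ∑ i, ell ρ (m i) ∧
      ((∑ i, ell ρ (m i)
          = ((k - s₁ : ℕ) : ℝ) * ell ρ ℓ₁ + (s₁ : ℝ) * ell ρ ((ℓ₁ : ℝ) + 1)) ↔
        (∀ i, m i = ℓ₁ ∨ m i = ℓ₁ + 1) ∧
          (Finset.univ.filter (fun i => m i = ℓ₁ + 1)).card = s₁) :=
  equidistribution_minimizes_general ρ hρ k ℓ₁ s₁ M hs₁ hM
end

section
/- Let ρ ∈ (1/2, 1). The function ψ_ρ defined on {(x,y) : x ≥ y ≥ 0, x > 0} by ψ_ρ(x,y) = α(ρ,⌊x/y⌋)·x + β(ρ,⌊x/y⌋)·y for y > 0 (with ψ_ρ(x,0) = x) satisfies the bounds sqrt(x² + y²) ≤ ψ_ρ(x,y) ≤ x + y. -/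
noncomputable def psi (ρ x y : ℝ) : ℝ :=
  if y = 0 then x else
    (ell ρ ((⌊x / y⌋ : ℝ) + 1) - ell ρ ((⌊x / y⌋ : ℝ))) * x
      + (ell ρ 1 + (⌊x / y⌋ : ℝ) * (ell ρ ((⌊x / y⌋ : ℝ)) - ell ρ ((⌊x / y⌋ : ℝ) + 1))
          + ell ρ ((⌊x / y⌋ : ℝ))) * y

open Complex Set

noncomputable def ellInterp (ρ t : ℝ) : ℝ :=
  (1 - Int.fract t) * ell ρ ⌊t⌋ + Int.fract t * ell ρ (⌊t⌋ + 1)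

lemma ell_eq_norm (ρ s : ℝ) : ell ρ s = ‖((1 - ρ : ℝ) + (s - (1 - ρ) : ℝ) * I : ℂ)‖ := by
  rw [norm_add_mul_I, ell]

lemma convexOn_ell (ρ : ℝ) : ConvexOn ℝ univ (ell ρ) := by
  have hnorm : ell ρ =
      norm ∘ AffineMap.lineMap ((1 - ρ : ℝ) - (1 - ρ : ℝ) * I : ℂ) ((1 - ρ : ℝ) + ρ * I) := by
    funext s
    rw [Function.comp_apply, AffineMap.lineMap_apply, vsub_eq_sub, vadd_eq_add, ell_eq_norm]
    congr 1
    simp only [real_smul, ofReal_sub, ofReal_one]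
    ring
  rw [hnorm]
  simpa using (convexOn_norm convex_univ).comp_affineMap _

lemma ell_le_ellInterp (ρ t : ℝ) : ell ρ t ≤ ellInterp ρ t := by
  have hconv := (convexOn_ell ρ).2 (mem_univ (⌊t⌋ : ℝ)) (mem_univ ((⌊t⌋ : ℝ) + 1))
    (by linarith [Int.fract_lt_one t] : 0 ≤ 1 - Int.fract t) (Int.fract_nonneg t)
    (sub_add_cancel 1 _)
  calc ell ρ t = ell ρ ((1 - Int.fract t) * ⌊t⌋ + Int.fract t * (⌊t⌋ + 1)) := by
        rw [← Int.self_sub_floor]; ring_nf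
    _ ≤ ellInterp ρ t := hconv

lemma ell_le_self {ρ s : ℝ} (hρ : ρ ≤ 1) (hs : 1 - ρ ≤ s) : ell ρ s ≤ s :=
  Real.sqrt_le_iff.2 ⟨by linarith, by nlinarith⟩

lemma ellInterp_le_self {ρ t : ℝ} (hρ : ρ ∈ Icc 0 1) (ht : 1 ≤ t) : ellInterp ρ t ≤ t := by
  have hK : (1 : ℝ) ≤ ⌊t⌋ := by exact_mod_cast Int.le_floor.2 (by exact_mod_cast ht)
  have h₀ := ell_le_self hρ.2 (by linarith [hρ.1] : 1 - ρ ≤ ⌊t⌋)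
  have h₁ := ell_le_self hρ.2 (by linarith [hρ.1] : 1 - ρ ≤ ⌊t⌋ + 1)
  have hfract := Int.fract_nonneg t
  have hfract' := Int.fract_lt_one t
  calc ellInterp ρ t ≤ (1 - Int.fract t) * ⌊t⌋ + Int.fract t * (⌊t⌋ + 1) := by
        unfold ellInterp; gcongr
    _ = t := by rw [← Int.self_sub_floor]; ring

lemma sqrt_sq_add_one_le (ρ t : ℝ) : √(t ^ 2 + 1) ≤ ell ρ t + ell ρ 1 := by
  have h := norm_add_le (((t - (1 - ρ) : ℝ) : ℂ) + (1 - ρ : ℝ) * I)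
    (((1 - ρ : ℝ) : ℂ) + (ρ : ℝ) * I)
  rw [norm_add_mul_I, norm_add_mul_I] at h
  convert h using 1
  · rw [← one_pow 2, ← norm_add_mul_I]
    congr 1
    push_cast
    ring
  · rw [ell, ell, add_comm ((t - (1 - ρ)) ^ 2)]
    norm_num

lemma psi_eq_mul_ellInterp (ρ x : ℝ) {y : ℝ} (hy : y ≠ 0) :
    psi ρ x y = y * (ellInterp ρ (x / y) + ell ρ 1) := by
  rw [psi, if_neg hy, ellInterp, ← Int.self_sub_floor]
  field_simp
  ring

theorem psi_bounds_general (ρ : ℝ) (hρ : ρ ∈ Set.Ioo (1/2 : ℝ) 1)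
    (x y : ℝ) (hy : 0 ≤ y) (hxy : y ≤ x) :
    Real.sqrt (x^2 + y^2) ≤ psi ρ x y ∧ psi ρ x y ≤ x + y := by
  rcases hy.eq_or_lt with rfl | hy
  · simp [psi, Real.sqrt_sq hxy]
  have ht : 1 ≤ x / y := (one_le_div hy).2 hxy
  have hρ' : ρ ∈ Icc 0 1 := ⟨by linarith [hρ.1], hρ.2.le⟩
  rw [psi_eq_mul_ellInterp ρ x hy.ne']
  constructor
  · calc √(x ^ 2 + y ^ 2) = y * √((x / y) ^ 2 + 1) := by
          rw [← Real.sqrt_sq hy.le, ← Real.sqrt_mul (sq_nonneg y), Real.sqrt_sq hy.le]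
          congr 1
          field_simp
      _ ≤ y * (ell ρ (x / y) + ell ρ 1) := by
          gcongr
          exact sqrt_sq_add_one_le ρ _
      _ ≤ y * (ellInterp ρ (x / y) + ell ρ 1) := by
          gcongr
          exact ell_le_ellInterp ρ _
  · calc y * (ellInterp ρ (x / y) + ell ρ 1) ≤ y * (x / y + 1) := by
          gcongr
          exacts [ellInterp_le_self hρ' ht, ell_le_self hρ'.2 (by linarith [hρ'.1])]
      _ = x + y := by field_simp

theorem psi_bounds (ρ : ℝ) (hρ : ρ ∈ Set.Ioo (1/2 : ℝ) 1)
    (x y : ℝ) (hy : 0 ≤ y) (hxy : y ≤ x) (hx : 0 < x) :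
    Real.sqrt (x^2 + y^2) ≤ psi ρ x y ∧ psi ρ x y ≤ x + y :=
  psi_bounds_general ρ hρ x y hy hxy
end
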